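/- For discrete random variables X, U on finite alphabets, deterministic functions f1, f2 of X, and reals p1, p2, λ with p̄1 = 1−p1, p̄2 = 1−p2, p̄1/p̄2 < λ ≤ 1 and p1 ≥ p2, the following holds: (λ·p̄2 − p̄1)·H(f2(X)|U) + (λ·p2 − p1)·H(f1(X)|U) ≤ (λ·p̄2 − p̄1)·H(f2(X)|f1(X)), with equality when U = f1(X). -/

import Mathlib

open Real

/-- Probability that discrete random variable `X` equals `x`, under weight function `p`. -/
noncomputable def pr {Ω α : Type*} [Fintype Ω] [DecidableEq α] (p : Ω → ℝ) (X : Ω → α) (x : α) : ℝ :=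
  ∑ ω, if X ω = x then p ω else 0

/-- Shannon entropy (natural log) of a discrete random variable `X`. -/
noncomputable def ent {Ω α : Type*} [Fintype Ω] [Fintype α] [DecidableEq α] (p : Ω → ℝ) (X : Ω → α) : ℝ :=
  ∑ x, Real.negMulLog (pr p X x)

/-- Conditional Shannon entropy `H(X|Y) = H(X,Y) - H(Y)`. -/
noncomputable def condEnt {Ω α β : Type*} [Fintype Ω] [Fintype α] [Fintype β] [DecidableEq α] [DecidableEq β]
    (p : Ω → ℝ) (X : Ω → α) (Y : Ω → β) : ℝ :=
  ent p (fun ω => (X ω, Y ω)) - ent p Y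

/-- Mutual information `I(X;Y) = H(X) + H(Y) - H(X,Y)`. -/
noncomputable def mi {Ω α β : Type*} [Fintype Ω] [Fintype α] [Fintype β] [DecidableEq α] [DecidableEq β]
    (p : Ω → ℝ) (X : Ω → α) (Y : Ω → β) : ℝ :=
  ent p X + ent p Y - ent p (fun ω => (X ω, Y ω))

/-- Conditional mutual information `I(X;Y|Z) = H(X|Z) + H(Y|Z) - H(X,Y|Z)`. -/
noncomputable def condMI {Ω α β γ : Type*} [Fintype Ω] [Fintype α] [Fintype β] [Fintype γ]
    [DecidableEq α] [DecidableEq β] [DecidableEq γ]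
    (p : Ω → ℝ) (X : Ω → α) (Y : Ω → β) (Z : Ω → γ) : ℝ :=
  condEnt p X Z + condEnt p Y Z - condEnt p (fun ω => (X ω, Y ω)) Z

/-- `p` is a probability mass function on the finite sample space `Ω`. -/
def IsProb {Ω : Type*} [Fintype Ω] (p : Ω → ℝ) : Prop :=
  (∀ ω, 0 ≤ p ω) ∧ ∑ ω, p ω = 1

/-!
Write `a = λ p̄₂ - p̄₁` and `A = f₁(X)`, `B = f₂(X)`. The hypotheses give `a ≥ 0` and
`λ p₂ - p₁ = (λ - 1) - a` with `λ - 1 ≤ 0`, so the left-hand side equals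
`(λ - 1) H(A|U) + a (H(B|U) - H(A|U))`. By the chain rule `H(B|U) - H(A|U) = H(B|A,U) - H(A|B,U)`;
dropping the nonpositive terms and using that conditioning reduces entropy,
`H(B|A,U) ≤ H(B|A)`, gives the bound. Conditioning reduces entropy is proved from Gibbs'
inequality `∑ q log (q / r) ≥ 0` applied to the joint law and the product of its conditional
marginals.
-/

open Finset

/-- The pointwise Gibbs bound `q - r ≤ q log (q / r)` for `r = a b / c`. -/
lemma sub_div_le_mul_log {q a b c : ℝ} (hq : 0 ≤ q) (ha : q ≤ a) (hb : q ≤ b) (hc : a ≤ c) :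
    q - a * b / c ≤ q * log q + q * log c - q * log a - q * log b := by
  rcases hq.eq_or_lt with rfl | hq
  · have : 0 ≤ a * b / c := div_nonneg (mul_nonneg ha hb) (ha.trans hc)
    simpa using this
  have ha' : 0 < a := hq.trans_le ha
  have hb' : 0 < b := hq.trans_le hb
  have hc' : 0 < c := ha'.trans_le hc
  have hlog := one_sub_inv_le_log_of_pos (x := q * c / (a * b)) (by positivity)
  rw [log_div (by positivity) (by positivity), log_mul hq.ne' hc'.ne', log_mul ha'.ne' hb'.ne',
    inv_div] at hlog
  have key := mul_le_mul_of_nonneg_left hlog hq.le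
  calc q - a * b / c = q * (1 - a * b / (q * c)) := by field_simp
    _ ≤ _ := key
    _ = _ := by ring

lemma sum_negMulLog_add_negMulLog_sum_le {α γ : Type*} [Fintype α] [Fintype γ]
    (q : α → γ → ℝ) (hq : ∀ x z, 0 ≤ q x z) :
    ∑ x, ∑ z, negMulLog (q x z) + negMulLog (∑ x, ∑ z, q x z)
      ≤ ∑ x, negMulLog (∑ z, q x z) + ∑ z, negMulLog (∑ x, q x z) := by
  -- Gibbs' inequality for `q` against `r x * c z / T`, whose total mass is also `T`.
  set r : α → ℝ := fun x => ∑ z, q x z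
  set c : γ → ℝ := fun z => ∑ x, q x z
  set T := ∑ x, r x
  have hr : ∀ x, 0 ≤ r x := fun x => sum_nonneg fun z _ => hq x z
  have hcT : ∑ z, c z = T := sum_comm
  have gibbs : ∀ x z, q x z - r x * c z / T
      ≤ q x z * log (q x z) + q x z * log T - q x z * log (r x) - q x z * log (c z) :=
    fun x z => sub_div_le_mul_log (hq x z)
      (single_le_sum (fun z _ => hq x z) (mem_univ z))
      (single_le_sum (fun x _ => hq x z) (mem_univ x))
      (single_le_sum (fun x _ => hr x) (mem_univ x))
  have hsum := sum_le_sum fun x (_ : x ∈ univ) => sum_le_sum fun z (_ : z ∈ univ) => gibbs x z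
  have hlhs : ∑ x, ∑ z, (q x z - r x * c z / T) = 0 := by
    simp only [sum_sub_distrib, ← mul_sum, ← sum_div, ← sum_mul, hcT]
    rw [mul_self_div_self, sub_self]
  have hrhs : ∑ x, ∑ z, (q x z * log (q x z) + q x z * log T - q x z * log (r x)
      - q x z * log (c z))
      = (∑ x, negMulLog (r x) + ∑ z, negMulLog (c z))
        - (∑ x, ∑ z, negMulLog (q x z) + negMulLog T) := by
    simp only [sum_sub_distrib, sum_add_distrib, ← sum_mul]
    rw [sum_comm (f := fun x z => q x z * log (c z))]
    simp only [← sum_mul, negMulLog, neg_mul, sum_neg_distrib]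
    ring
  linarith

lemma negMulLog_sum_le {ι : Type*} (s : Finset ι) (f : ι → ℝ) (hf : ∀ i ∈ s, 0 ≤ f i) :
    negMulLog (∑ i ∈ s, f i) ≤ ∑ i ∈ s, negMulLog (f i) := by
  calc negMulLog (∑ i ∈ s, f i) = ∑ i ∈ s, -(f i * log (∑ j ∈ s, f j)) := by
        simp [negMulLog, sum_mul]
    _ ≤ ∑ i ∈ s, negMulLog (f i) := sum_le_sum fun i hi => by
        rw [negMulLog, neg_mul, neg_le_neg_iff]
        rcases (hf i hi).eq_or_lt with hfi | hfi
        · simp [← hfi]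
        · exact mul_le_mul_of_nonneg_left (log_le_log hfi (single_le_sum hf hi)) hfi.le

section Entropy

variable {Ω α β γ : Type*} [Fintype Ω] [Fintype α] [Fintype β] [Fintype γ]
  [DecidableEq α] [DecidableEq β] [DecidableEq γ] {p : Ω → ℝ}

omit [Fintype α] in
lemma pr_nonneg (hp : ∀ ω, 0 ≤ p ω) (X : Ω → α) (x : α) : 0 ≤ pr p X x :=
  sum_nonneg fun ω _ => by split <;> simp [hp ω]

omit [Fintype β] in
lemma pr_eq_sum_pr_pair (X : Ω → α) (Y : Ω → β) (y : β) :
    pr p Y y = ∑ x, pr p (fun ω => (X ω, Y ω)) (x, y) := by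
  simp only [pr]
  rw [sum_comm]
  refine sum_congr rfl fun ω _ => ?_
  simp [Prod.ext_iff, ite_and]

omit [Fintype α] [Fintype β] in
lemma pr_pair_eq_sum_pr_triple (A : Ω → α) (B : Ω → β) (C : Ω → γ) (x : α) (y : β) :
    pr p (fun ω => (A ω, B ω)) (x, y) = ∑ z, pr p (fun ω => (A ω, B ω, C ω)) (x, y, z) := by
  simp only [pr]
  rw [sum_comm]
  refine sum_congr rfl fun ω _ => ?_
  simp [Prod.ext_iff, ite_and]

lemma ent_comp_of_injective (X : Ω → α) {e : α → β} (he : Function.Injective e) :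
    ent p (fun ω => e (X ω)) = ent p X := by
  refine (Fintype.sum_of_injective e he _ _ (fun b hb => ?_) fun a => ?_).symm
  · simp only [pr]
    rw [sum_eq_zero fun ω _ => if_neg fun h => hb ⟨X ω, h⟩, negMulLog_zero]
  · simp [pr, he.eq_iff]

lemma ent_le_ent_pair (hp : ∀ ω, 0 ≤ p ω) (X : Ω → α) (Y : Ω → β) :
    ent p Y ≤ ent p (fun ω => (X ω, Y ω)) := by
  rw [ent, ent, Fintype.sum_prod_type, sum_comm]
  refine sum_le_sum fun y _ => ?_
  rw [pr_eq_sum_pr_pair X Y y]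
  exact negMulLog_sum_le _ _ fun x _ => pr_nonneg hp _ _

lemma condEnt_nonneg (hp : ∀ ω, 0 ≤ p ω) (X : Ω → α) (Y : Ω → β) : 0 ≤ condEnt p X Y :=
  sub_nonneg.mpr (ent_le_ent_pair hp X Y)

lemma condEnt_self (X : Ω → α) : condEnt p X X = 0 := by
  rw [condEnt, ent_comp_of_injective X (e := fun x => (x, x)) fun _ _ h => (Prod.ext_iff.mp h).1,
    sub_self]

lemma condEnt_pair_le (hp : ∀ ω, 0 ≤ p ω) (A : Ω → α) (B : Ω → β) (C : Ω → γ) :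
    condEnt p A (fun ω => (B ω, C ω)) ≤ condEnt p A B := by
  set q : α → β → γ → ℝ := fun x y z => pr p (fun ω => (A ω, B ω, C ω)) (x, y, z)
  have hABC : ent p (fun ω => (A ω, B ω, C ω)) = ∑ y, ∑ x, ∑ z, negMulLog (q x y z) := by
    simp only [ent, Fintype.sum_prod_type]
    exact sum_comm
  have hAB : ent p (fun ω => (A ω, B ω)) = ∑ y, ∑ x, negMulLog (∑ z, q x y z) := by
    simp only [ent, Fintype.sum_prod_type, pr_pair_eq_sum_pr_triple A B C]
    exact sum_comm
  have hBC : ent p (fun ω => (B ω, C ω)) = ∑ y, ∑ z, negMulLog (∑ x, q x y z) := by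
    simp only [ent, Fintype.sum_prod_type]
    exact sum_congr rfl fun y _ => sum_congr rfl fun z _ => by
      rw [pr_eq_sum_pr_pair A (fun ω => (B ω, C ω)) (y, z)]
  have hB : ent p B = ∑ y, negMulLog (∑ x, ∑ z, q x y z) := by
    refine sum_congr rfl fun y _ => ?_
    simp only [pr_eq_sum_pr_pair A B y, pr_pair_eq_sum_pr_triple A B C, q]
  have := sum_le_sum fun y (_ : y ∈ univ) =>
    sum_negMulLog_add_negMulLog_sum_le (q · y ·) fun x z => pr_nonneg hp _ _
  rw [sum_add_distrib, sum_add_distrib, ← hABC, ← hAB, ← hBC, ← hB] at this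
  simp only [condEnt]
  linarith

lemma condEnt_sub_condEnt (A : Ω → α) (B : Ω → β) (C : Ω → γ) :
    condEnt p A C - condEnt p B C
      = condEnt p A (fun ω => (B ω, C ω)) - condEnt p B (fun ω => (A ω, C ω)) := by
  have hswap : ent p (fun ω => (B ω, A ω, C ω)) = ent p (fun ω => (A ω, B ω, C ω)) :=
    ent_comp_of_injective (fun ω => (A ω, B ω, C ω)) (e := fun t => (t.2.1, t.1, t.2.2))
      fun _ _ h => by simp_all [Prod.ext_iff]
  simp only [condEnt]
  linarith

lemma condEnt_sub_condEnt_le (hp : ∀ ω, 0 ≤ p ω) (A : Ω → α) (B : Ω → β) (U : Ω → γ) :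
    condEnt p B U - condEnt p A U ≤ condEnt p B A := by
  rw [condEnt_sub_condEnt]
  linarith [condEnt_pair_le hp B A U, condEnt_nonneg hp A (fun ω => (B ω, U ω))]

end Entropy

lemma le_mul_of_div_lt_of_le_one {x y t : ℝ} (h : x / y < t) (ht : t ≤ 1) (hxy : x ≤ y) :
    x ≤ t * y := by
  rcases lt_or_ge 0 y with hy | hy
  · exact ((div_lt_iff₀ hy).mp h).le
  · nlinarith

theorem stmt1_general {Ω 𝒳 𝒰 𝒴 : Type*} [Fintype Ω] [Fintype 𝒳] [Fintype 𝒰] [Fintype 𝒴]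
    [DecidableEq 𝒳] [DecidableEq 𝒰] [DecidableEq 𝒴]
    (p : Ω → ℝ) (hp : IsProb p) (X : Ω → 𝒳) (U : Ω → 𝒰) (f1 f2 : 𝒳 → 𝒴)
    (lam p1 p2 : ℝ)
    (hlamlb : (1 - p1) / (1 - p2) < lam) (hlam1 : lam ≤ 1) (h12 : p2 ≤ p1) :
    (lam * (1 - p2) - (1 - p1)) * condEnt p (fun ω => f2 (X ω)) U
      + (lam * p2 - p1) * condEnt p (fun ω => f1 (X ω)) U
      ≤ (lam * (1 - p2) - (1 - p1)) * condEnt p (fun ω => f2 (X ω)) (fun ω => f1 (X ω))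
    ∧ (lam * (1 - p2) - (1 - p1)) * condEnt p (fun ω => f2 (X ω)) (fun ω => f1 (X ω))
      + (lam * p2 - p1) * condEnt p (fun ω => f1 (X ω)) (fun ω => f1 (X ω))
      = (lam * (1 - p2) - (1 - p1)) * condEnt p (fun ω => f2 (X ω)) (fun ω => f1 (X ω)) := by
  set A := fun ω => f1 (X ω)
  set B := fun ω => f2 (X ω)
  have ha : 0 ≤ lam * (1 - p2) - (1 - p1) :=
    sub_nonneg.mpr (le_mul_of_div_lt_of_le_one hlamlb hlam1 (by linarith))
  have hdiff := mul_le_mul_of_nonneg_left (condEnt_sub_condEnt_le hp.1 A B U) ha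
  have hA := mul_nonpos_of_nonpos_of_nonneg (sub_nonpos.mpr hlam1) (condEnt_nonneg hp.1 A U)
  refine ⟨?_, by rw [condEnt_self]; ring⟩
  linear_combination hdiff + hA

/-- if `p̄1/p̄2 < λ ≤ 1` and `p1 ≥ p2`, then
`(λ p̄2 − p̄1) H(f2(X)|U) + (λ p2 − p1) H(f1(X)|U) ≤ (λ p̄2 − p̄1) H(f2(X)|f1(X))`,
with equality when `U = f1(X)`. -/
theorem stmt1 {Ω 𝒳 𝒰 𝒴 : Type*} [Fintype Ω] [Fintype 𝒳] [Fintype 𝒰] [Fintype 𝒴]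
    [DecidableEq 𝒳] [DecidableEq 𝒰] [DecidableEq 𝒴]
    (p : Ω → ℝ) (hp : IsProb p) (X : Ω → 𝒳) (U : Ω → 𝒰) (f1 f2 : 𝒳 → 𝒴)
    (lam p1 p2 : ℝ) (hp1 : p1 ∈ Set.Icc (0:ℝ) 1) (hp2 : p2 ∈ Set.Icc (0:ℝ) 1)
    (hlamlb : (1 - p1) / (1 - p2) < lam) (hlam1 : lam ≤ 1) (h12 : p2 ≤ p1) :
    (lam * (1 - p2) - (1 - p1)) * condEnt p (fun ω => f2 (X ω)) U
      + (lam * p2 - p1) * condEnt p (fun ω => f1 (X ω)) U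
      ≤ (lam * (1 - p2) - (1 - p1)) * condEnt p (fun ω => f2 (X ω)) (fun ω => f1 (X ω))
    ∧ (lam * (1 - p2) - (1 - p1)) * condEnt p (fun ω => f2 (X ω)) (fun ω => f1 (X ω))
      + (lam * p2 - p1) * condEnt p (fun ω => f1 (X ω)) (fun ω => f1 (X ω))
      = (lam * (1 - p2) - (1 - p1)) * condEnt p (fun ω => f2 (X ω)) (fun ω => f1 (X ω)) :=
  stmt1_general p hp X U f1 f2 lam p1 p2 hlamlb hlam1 h12
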